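/- Equip P = k[x₁,x₂,x₃] with the Poisson bracket {x₁,x₂} = 0, {x₂,x₃} = 2x₁x₂, {x₃,x₁} = x₁². Fix an integer l ≥ 2, a primitive l-th root of unity ξ ∈ k, and d ∈ k, and let φ be the graded Poisson automorphism with φ(x₁) = x₁, φ(x₂) = ξ·x₂, φ(x₃) = d·x₂ + x₃. Then G = ⟨φ⟩ is a finite group of order l, the invariant subalgebra P^G equals the k-subalgebra generated by y₁ = x₁, y₂ = d·x₂ + (1−ξ)·x₃, y₃ = x₂^l, and these generators satisfy {y₁,y₂} = (ξ−1)y₁², {y₂,y₃} = 2l(ξ−1)y₁y₃, {y₃,y₁} = 0. -/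

import Mathlib

/-! The shear `T : x₃ ↦ d x₂ + (1 - ξ) x₃` conjugates the diagonal automorphism
`D : x₂ ↦ ξ x₂` into `φ`, i.e. `T ∘ D = φ ∘ T`. Hence `φ` has the order `l` of `ξ`, and its
invariants are the image under `T` of the invariants of `D`. A polynomial is `D`-invariant
exactly when each of its monomials has `x₂`-degree divisible by `l`, so these invariants form
`k[x₁, x₂ ^ l, x₃]`, whose image under `T` is `k[y₁, y₃, y₂]`. The three brackets are direct
computations with the Jacobian formula. -/

open MvPolynomial

/-- The bracket on `k[x₁,x₂,x₃]` determined by the values `p12 = {x₁,x₂}`, `p23 = {x₂,x₃}`,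
`p31 = {x₃,x₁}` via `{f,g} = Σ_{i<j} (∂f/∂xᵢ·∂g/∂xⱼ − ∂f/∂xⱼ·∂g/∂xᵢ)·{xᵢ,xⱼ}`. -/
noncomputable def jacBracket {k : Type*} [Field k] (p12 p23 p31 : MvPolynomial (Fin 3) k)
    (f g : MvPolynomial (Fin 3) k) : MvPolynomial (Fin 3) k :=
  (pderiv 0 f * pderiv 1 g - pderiv 1 f * pderiv 0 g) * p12 +
    (pderiv 1 f * pderiv 2 g - pderiv 2 f * pderiv 1 g) * p23 +
    (pderiv 2 f * pderiv 0 g - pderiv 0 f * pderiv 2 g) * p31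


namespace MvPolynomial

variable {σ R : Type*} [CommRing R] [DecidableEq σ]

noncomputable def scaleVarHom (i : σ) (r : R) : MvPolynomial σ R →ₐ[R] MvPolynomial σ R :=
  aeval (Function.update X i (C r * X i))

theorem scaleVarHom_monomial (i : σ) (r : R) (n : σ →₀ ℕ) (c : R) :
    scaleVarHom i r (monomial n c) = monomial n (r ^ n i * c) := by
  have hfactor : ∀ j, Function.update X i (C r * X i) j ^ n j =
      C (if j = i then r ^ n j else 1) * X j ^ n j := by
    intro j
    by_cases h : j = i
    · subst h; simp [mul_pow]
    · simp [h]
  have hcoef : ∏ j ∈ n.support, (if j = i then r ^ n j else 1) = r ^ n i := by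
    rw [Finset.prod_ite_eq']
    split_ifs with h
    · rfl
    · rw [Finsupp.notMem_support_iff.mp h, pow_zero]
  rw [scaleVarHom, aeval_monomial, Finsupp.prod, Finset.prod_congr rfl fun j _ => hfactor j,
    Finset.prod_mul_distrib, ← map_prod, hcoef, monomial_eq, Finsupp.prod, C_mul, algebraMap_eq]
  ring

theorem coeff_scaleVarHom (i : σ) (r : R) (p : MvPolynomial σ R) (m : σ →₀ ℕ) :
    coeff m (scaleVarHom i r p) = r ^ m i * coeff m p := by
  induction p using MvPolynomial.induction_on' with
  | monomial n c =>
    rw [scaleVarHom_monomial, coeff_monomial, coeff_monomial]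
    split_ifs with h
    · rw [h]
    · rw [mul_zero]
  | add p q hp hq => rw [map_add, coeff_add, coeff_add, hp, hq, mul_add]

@[simp]
theorem scaleVarHom_X_self (i : σ) (r : R) : scaleVarHom i r (X i) = C r * X i := by
  simp [scaleVarHom]

@[simp]
theorem scaleVarHom_X_of_ne {i j : σ} (h : j ≠ i) (r : R) : scaleVarHom i r (X j) = X j := by
  simp [scaleVarHom, h]

theorem scaleVarHom_one (i : σ) : scaleVarHom i (1 : R) = AlgHom.id R _ :=
  AlgHom.ext fun p => MvPolynomial.ext _ _ fun m => by simp [coeff_scaleVarHom]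

theorem scaleVarHom_mul (i : σ) (r s : R) :
    scaleVarHom i (r * s) = (scaleVarHom i r).comp (scaleVarHom i s) :=
  AlgHom.ext fun p => MvPolynomial.ext _ _ fun m => by
    simp [coeff_scaleVarHom, mul_pow, mul_assoc]

noncomputable def scaleVar (i : σ) : Rˣ →* (MvPolynomial σ R ≃ₐ[R] MvPolynomial σ R) where
  toFun u := AlgEquiv.ofAlgHom (scaleVarHom i u) (scaleVarHom i ↑u⁻¹)
    (by rw [← scaleVarHom_mul, u.mul_inv, scaleVarHom_one])
    (by rw [← scaleVarHom_mul, u.inv_mul, scaleVarHom_one])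
  map_one' := AlgEquiv.ext fun p => by simp [scaleVarHom_one]
  map_mul' u v := AlgEquiv.ext fun p => by simp [scaleVarHom_mul]

theorem scaleVar_apply (i : σ) (u : Rˣ) (p : MvPolynomial σ R) :
    scaleVar i u p = scaleVarHom i (u : R) p :=
  rfl

theorem scaleVar_injective (i : σ) : Function.Injective (scaleVar (R := R) i) := by
  intro u v huv
  have h := congrArg (coeff (Finsupp.single i 1)) (congrArg (· (X i)) huv)
  simp only [scaleVar_apply, coeff_scaleVarHom, coeff_X, Finsupp.single_eq_same, pow_one,
    if_true, mul_one] at h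
  exact Units.ext h

theorem orderOf_scaleVar (i : σ) (u : Rˣ) : orderOf (scaleVar i u) = orderOf u :=
  orderOf_injective _ (scaleVar_injective i) u

theorem monomial_mem_adjoin_X_pow {i : σ} {n : ℕ} {m : σ →₀ ℕ} (h : n ∣ m i) (c : R) :
    monomial m c ∈ Algebra.adjoin R (insert (X i ^ n) (X '' ({i}ᶜ : Set σ))) := by
  rw [monomial_eq, Finsupp.prod]
  refine mul_mem (Subalgebra.algebraMap_mem _ c) (Subalgebra.prod_mem _ fun j _ => ?_)
  by_cases hj : j = i
  · obtain ⟨q, hq⟩ := h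
    rw [hj, hq, pow_mul]
    exact pow_mem (Algebra.subset_adjoin (Set.mem_insert _ _)) q
  · exact pow_mem (Algebra.subset_adjoin
      (Set.mem_insert_of_mem _ (Set.mem_image_of_mem X hj))) _

theorem scaleVar_apply_eq_self_iff [IsDomain R] {i : σ} {u : Rˣ} {p : MvPolynomial σ R} :
    scaleVar i u p = p ↔
      p ∈ Algebra.adjoin R (insert (X i ^ orderOf u) (X '' ({i}ᶜ : Set σ))) := by
  constructor
  · intro hp
    rw [p.as_sum]
    refine Subalgebra.sum_mem _ fun m hm => monomial_mem_adjoin_X_pow ?_ _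
    have hcoeff := congrArg (coeff m) hp
    rw [scaleVar_apply, coeff_scaleVarHom] at hcoeff
    have hu : (u : R) ^ m i = 1 :=
      mul_right_cancel₀ (mem_support_iff.mp hm) (hcoeff.trans (one_mul _).symm)
    exact orderOf_dvd_of_pow_eq_one (by rwa [← Units.val_pow_eq_pow_val, Units.val_eq_one] at hu)
  · intro hp
    suffices Algebra.adjoin R (insert (X i ^ orderOf u) (X '' ({i}ᶜ : Set σ))) ≤
        AlgHom.equalizer (scaleVarHom i (u : R)) (AlgHom.id R _) from this hp
    refine Algebra.adjoin_le ?_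
    rintro _ (rfl | ⟨j, hj, rfl⟩)
    · simp [mul_pow, ← C_pow, ← Units.val_pow_eq_pow_val, pow_orderOf_eq_one]
    · simp [scaleVarHom_X_of_ne hj]

noncomputable def shearHom (i j : σ) (a c : R) : MvPolynomial σ R →ₐ[R] MvPolynomial σ R :=
  aeval (Function.update X i (C a * X j + C c * X i))

@[simp]
theorem shearHom_X_self (i j : σ) (a c : R) : shearHom i j a c (X i) = C a * X j + C c * X i := by
  simp [shearHom]

@[simp]
theorem shearHom_X_of_ne {i j k : σ} (h : k ≠ i) (a c : R) : shearHom i j a c (X k) = X k := by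
  simp [shearHom, h]

theorem shearHom_comp {i j : σ} (hij : i ≠ j) (a c a' c' : R) :
    (shearHom i j a c).comp (shearHom i j a' c') = shearHom i j (a' + c' * a) (c' * c) := by
  refine algHom_ext fun k => ?_
  by_cases hk : k = i
  · subst hk
    simp [shearHom_X_of_ne hij.symm]
    ring
  · simp [hk]

theorem shearHom_zero_one (i j : σ) : shearHom i j (0 : R) 1 = AlgHom.id R _ :=
  algHom_ext fun k => by by_cases hk : k = i <;> simp [hk]

noncomputable def shear {i j : σ} (hij : i ≠ j) (a : R) (c : Rˣ) :
    MvPolynomial σ R ≃ₐ[R] MvPolynomial σ R :=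
  AlgEquiv.ofAlgHom (shearHom i j a c) (shearHom i j (-(↑c⁻¹ * a)) ↑c⁻¹)
    (by rw [shearHom_comp hij]; simp [shearHom_zero_one])
    (by rw [shearHom_comp hij]; simp [shearHom_zero_one])

theorem shear_apply {i j : σ} (hij : i ≠ j) (a : R) (c : Rˣ) (p : MvPolynomial σ R) :
    shear hij a c p = shearHom i j a c p :=
  rfl

end MvPolynomial

theorem AlgEquiv.apply_eq_self_iff_of_semiconjBy {R A : Type*} [CommSemiring R] [Semiring A]
    [Algebra R A] {T D φ : A ≃ₐ[R] A} (h : SemiconjBy T D φ) (f : A) :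
    φ f = f ↔ D (T.symm f) = T.symm f := by
  conv_lhs => rw [← T.apply_symm_apply f]
  rw [← AlgEquiv.mul_apply φ T, ← h.eq, AlgEquiv.mul_apply, T.injective.eq_iff]

theorem AlgEquiv.forall_mem_zpowers_apply_eq_self_iff {R A : Type*} [CommSemiring R]
    [Semiring A] [Algebra R A] (φ : A ≃ₐ[R] A) (f : A) :
    (∀ ψ ∈ Subgroup.zpowers φ, ψ f = f) ↔ φ f = f := by
  refine ⟨fun h => h φ (Subgroup.mem_zpowers φ), fun h ψ hψ => ?_⟩
  obtain ⟨j, rfl⟩ := Subgroup.mem_zpowers_iff.mp hψ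
  exact MulAction.mem_fixedBy_zpow (g := φ) h j

theorem Algebra.mem_adjoin_image_algEquiv_iff {R A : Type*} [CommSemiring R] [Semiring A]
    [Algebra R A] (T : A ≃ₐ[R] A) (s : Set A) (f : A) :
    f ∈ Algebra.adjoin R (T '' s) ↔ T.symm f ∈ Algebra.adjoin R s := by
  rw [show (T '' s) = (T : A →ₐ[R] A) '' s from rfl, Algebra.adjoin_image, Subalgebra.mem_map]
  constructor
  · rintro ⟨g, hg, rfl⟩
    simpa using hg
  · exact fun hf => ⟨T.symm f, hf, by simp⟩

namespace MvPolynomial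

variable {R : Type*} [CommRing R]

theorem semiconjBy_shear_scaleVar {φ : MvPolynomial (Fin 3) R ≃ₐ[R] MvPolynomial (Fin 3) R}
    {a : R} {u c : Rˣ} (hc : (c : R) = 1 - u) (hφ0 : φ (X 0) = X 0)
    (hφ1 : φ (X 1) = C (u : R) * X 1) (hφ2 : φ (X 2) = C a * X 1 + X 2) :
    SemiconjBy (shear (show (2 : Fin 3) ≠ 1 by decide) a c) (scaleVar 1 u) φ := by
  have hφC (r : R) : φ (C r) = C r := φ.commutes r
  refine AlgEquiv.coe_toAlgHom_injective (algHom_ext fun k => ?_)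
  fin_cases k
  · simp [shear_apply, scaleVar_apply, hφ0]
  · simp [shear_apply, scaleVar_apply, hφ1]
  · simp [shear_apply, scaleVar_apply, hφ1, hφ2, hφC, hc]
    ring

theorem image_shear_insert_X_one_pow (a : R) (c : Rˣ) (n : ℕ) :
    shear (show (2 : Fin 3) ≠ 1 by decide) a c '' insert (X 1 ^ n) (X '' ({1}ᶜ : Set (Fin 3))) =
      {X 0, C a * X 1 + C (c : R) * X 2, X 1 ^ n} := by
  have hcompl : ({1}ᶜ : Set (Fin 3)) = {0, 2} := by
    ext j
    fin_cases j <;> simp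
  rw [hcompl, Set.image_insert_eq, Set.image_image, Set.image_pair]
  ext f
  simp [shear_apply]
  tauto

variable {k : Type*} [Field k]

theorem jacBracket_X_zero_shear (a c : k) :
    jacBracket 0 (2 * X 0 * X 1) (X 0 ^ 2) (X 0) (C a * X 1 + C c * X 2) = C (-c) * X 0 ^ 2 := by
  simp [jacBracket, pderiv_X]

theorem jacBracket_shear_X_one_pow (a c : k) (n : ℕ) :
    jacBracket 0 (2 * X 0 * X 1) (X 0 ^ 2) (C a * X 1 + C c * X 2) (X 1 ^ n) =
      C (2 * n * -c) * (X 0 * X 1 ^ n) := by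
  cases n with
  | zero => simp [jacBracket]
  | succ n =>
    simp [jacBracket, pderiv_X, map_ofNat]
    ring

theorem jacBracket_X_one_pow_X_zero (n : ℕ) :
    jacBracket 0 (2 * X 0 * X 1) (X 0 ^ 2) (X 1 ^ n) (X 0 : MvPolynomial (Fin 3) k) = 0 := by
  simp [jacBracket, pderiv_X]

end MvPolynomial

theorem stmt_19_general {k : Type*} [Field k]
    (l : ℕ) (hl : 2 ≤ l) (ξ : k) (hξ : ξ ^ l = 1 ∧ ∀ j, 1 ≤ j → j < l → ξ ^ j ≠ 1) (d : k)
    (φ : MvPolynomial (Fin 3) k ≃ₐ[k] MvPolynomial (Fin 3) k)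
    (hφ0 : φ (X 0) = X 0)
    (hφ1 : φ (X 1) = C ξ * X 1)
    (hφ2 : φ (X 2) = C d * X 1 + X 2) :
    Nat.card (Subgroup.zpowers φ) = l ∧
    {f : MvPolynomial (Fin 3) k | ∀ ψ ∈ Subgroup.zpowers φ, ψ f = f} =
      ↑(Algebra.adjoin k
          ({X 0, C d * X 1 + C (1 - ξ) * X 2, X 1 ^ l} : Set (MvPolynomial (Fin 3) k))) ∧
    jacBracket 0 (2 * X 0 * X 1) (X 0 ^ 2) (X 0) (C d * X 1 + C (1 - ξ) * X 2) =
      C (ξ - 1) * X 0 ^ 2 ∧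
    jacBracket 0 (2 * X 0 * X 1) (X 0 ^ 2) (C d * X 1 + C (1 - ξ) * X 2) (X 1 ^ l) =
      C (2 * (l : k) * (ξ - 1)) * (X 0 * X 1 ^ l) ∧
    jacBracket 0 (2 * X 0 * X 1) (X 0 ^ 2) (X 1 ^ l) (X 0 : MvPolynomial (Fin 3) k) = 0 := by
  have hprim : IsPrimitiveRoot ξ l := .mk_of_lt ξ (by omega) hξ.1 fun j hj hjl => hξ.2 j hj hjl
  have horder : orderOf ξ = l := hprim.eq_orderOf.symm
  lift ξ to kˣ using (hprim.ne_zero (by omega)).isUnit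
  rw [orderOf_units] at horder
  obtain ⟨c, hc⟩ : ∃ c : kˣ, (c : k) = 1 - ξ :=
    ⟨Units.mk0 _ (sub_ne_zero.mpr (hprim.ne_one (by omega)).symm), rfl⟩
  have hconj := semiconjBy_shear_scaleVar hc hφ0 hφ1 hφ2
  refine ⟨?_, ?_, ?_, ?_, jacBracket_X_one_pow_X_zero l⟩
  · rw [Nat.card_zpowers, ← hconj.orderOf_eq, orderOf_scaleVar, horder]
  · ext f
    calc (∀ ψ ∈ Subgroup.zpowers φ, ψ f = f) ↔ φ f = f :=
          φ.forall_mem_zpowers_apply_eq_self_iff f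
      _ ↔ _ := AlgEquiv.apply_eq_self_iff_of_semiconjBy hconj f
      _ ↔ _ := by rw [scaleVar_apply_eq_self_iff, horder]
      _ ↔ _ := by
        rw [← hc, ← image_shear_insert_X_one_pow, SetLike.mem_coe,
          Algebra.mem_adjoin_image_algEquiv_iff]
  · rw [jacBracket_X_zero_shear, neg_sub]
  · rw [jacBracket_shear_X_one_pow, neg_sub]

/-- For the bracket `{x₁,x₂} = 0`, `{x₂,x₃} = 2x₁x₂`, `{x₃,x₁} = x₁²` and the graded Poisson
automorphism `φ : x₁ ↦ x₁, x₂ ↦ ξx₂, x₃ ↦ dx₂ + x₃` with `ξ` a primitive `l`-th root of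
unity (`l ≥ 2`), the group `G = ⟨φ⟩` has order `l`, the invariant subalgebra `P^G` is
generated by `y₁ = x₁`, `y₂ = dx₂ + (1−ξ)x₃`, `y₃ = x₂^l`, and `{y₁,y₂} = (ξ−1)y₁²`,
`{y₂,y₃} = 2l(ξ−1)y₁y₃`, `{y₃,y₁} = 0`. -/
theorem stmt_19 {k : Type*} [Field k] [IsAlgClosed k] [CharZero k]
    (l : ℕ) (hl : 2 ≤ l) (ξ : k) (hξ : ξ ^ l = 1 ∧ ∀ j, 1 ≤ j → j < l → ξ ^ j ≠ 1) (d : k)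
    (φ : MvPolynomial (Fin 3) k ≃ₐ[k] MvPolynomial (Fin 3) k)
    (hφ0 : φ (X 0) = X 0)
    (hφ1 : φ (X 1) = C ξ * X 1)
    (hφ2 : φ (X 2) = C d * X 1 + X 2)
    (hbr : ∀ f g, φ (jacBracket 0 (2 * X 0 * X 1) (X 0 ^ 2) f g) =
      jacBracket 0 (2 * X 0 * X 1) (X 0 ^ 2) (φ f) (φ g)) :
    Nat.card (Subgroup.zpowers φ) = l ∧
    {f : MvPolynomial (Fin 3) k | ∀ ψ ∈ Subgroup.zpowers φ, ψ f = f} =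
      ↑(Algebra.adjoin k
          ({X 0, C d * X 1 + C (1 - ξ) * X 2, X 1 ^ l} : Set (MvPolynomial (Fin 3) k))) ∧
    jacBracket 0 (2 * X 0 * X 1) (X 0 ^ 2) (X 0) (C d * X 1 + C (1 - ξ) * X 2) =
      C (ξ - 1) * X 0 ^ 2 ∧
    jacBracket 0 (2 * X 0 * X 1) (X 0 ^ 2) (C d * X 1 + C (1 - ξ) * X 2) (X 1 ^ l) =
      C (2 * (l : k) * (ξ - 1)) * (X 0 * X 1 ^ l) ∧
    jacBracket 0 (2 * X 0 * X 1) (X 0 ^ 2) (X 1 ^ l) (X 0 : MvPolynomial (Fin 3) k) = 0 :=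
  stmt_19_general l hl ξ hξ d φ hφ0 hφ1 hφ2
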